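/- As R → +∞, g_NA(z_NA(R), R) converges to the limit E := (k12/(k11+k12))/k11 · (1 − k12/(2(k11+k12))) + (k11/(k11+k12))/k12 · (1 − k11/(2(k11+k12))) + (k22/(k22+k21))/k21 · (1 − k22/(2(k22+k21))) + (k21/(k22+k21))/k22 · (1 − k21/(2(k22+k21))). -/

import Mathlib

/-- The Principal's reduced objective `g_NA(z, R)` in the no-Planner (Nash) model. -/
noncomputable def gNA (k11 k12 k21 k22 : ℝ) (z : Fin 2 → Fin 2 → ℝ) (R : ℝ) : ℝ :=
  -(R / 2) * (z 0 0 + z 0 1 - 1) ^ 2 - (R / 2) * (z 1 0 + z 1 1 - 1) ^ 2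
    + z 0 0 / k11 + z 0 1 / k12 + z 1 0 / k21 + z 1 1 / k22
    - (z 0 0) ^ 2 / (2 * k11) - (z 0 1) ^ 2 / (2 * k12)
    - (z 1 0) ^ 2 / (2 * k21) - (z 1 1) ^ 2 / (2 * k22)

/-- The optimal sensitivities `z_NA(R)` in the no-Planner (Nash) model. -/
noncomputable def zNA (k11 k12 k21 k22 R : ℝ) : Fin 2 → Fin 2 → ℝ :=
  ![![(1 + R * k12) / (1 + R * (k11 + k12)), (1 + R * k11) / (1 + R * (k11 + k12))],
    ![(1 + R * k22) / (1 + R * (k21 + k22)), (1 + R * k21) / (1 + R * (k21 + k22))]]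

/-!
`g_NA` splits into one objective per row of `z`. On the row solution with costs `a, b` and
`s = a + b`, the entries are `(1 + R b)/(1 + R s) → b/s` and `(1 + R a)/(1 + R s) → a/s`, and their
sum exceeds `1` by exactly `1/(1 + R s)`, so the penalty `(R/2)(x + y - 1)²` is `O(1/R)` and
vanishes in the limit; what remains is the cost part evaluated at `(b/s, a/s)`.
-/

open Filter Topology

noncomputable def rowObjective (a b x y R : ℝ) : ℝ :=
  -(R / 2) * (x + y - 1) ^ 2 + x / a + y / b - x ^ 2 / (2 * a) - y ^ 2 / (2 * b)

lemma gNA_eq_rowObjective_add (k11 k12 k21 k22 : ℝ) (z : Fin 2 → Fin 2 → ℝ) (R : ℝ) :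
    gNA k11 k12 k21 k22 z R =
      rowObjective k11 k12 (z 0 0) (z 0 1) R + rowObjective k21 k22 (z 1 0) (z 1 1) R := by
  simp only [gNA, rowObjective]
  ring

lemma eventually_one_add_mul_ne_zero {s : ℝ} (hs : s ≠ 0) :
    ∀ᶠ R : ℝ in atTop, 1 + R * s ≠ 0 := by
  filter_upwards [eventually_ne_atTop (-s⁻¹)] with R hR hzero
  exact hR (by field_simp; linarith)

lemma tendsto_one_add_mul_div_one_add_mul_atTop (a : ℝ) {b : ℝ} (hb : b ≠ 0) :
    Tendsto (fun R : ℝ => (1 + R * a) / (1 + R * b)) atTop (𝓝 (a / b)) := by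
  have hinv : ∀ᶠ R : ℝ in atTop, (R⁻¹ + a) / (R⁻¹ + b) = (1 + R * a) / (1 + R * b) := by
    filter_upwards [eventually_ne_atTop 0] with R hR
    rw [← mul_div_mul_left _ _ hR]
    field_simp
  refine Tendsto.congr' hinv ?_
  have h := (tendsto_inv_atTop_zero.add_const a).div (tendsto_inv_atTop_zero.add_const b)
    (by rwa [zero_add])
  rwa [zero_add, zero_add] at h

lemma tendsto_div_one_add_mul_sq_atTop {b : ℝ} (hb : b ≠ 0) :
    Tendsto (fun R : ℝ => R / (1 + R * b) ^ 2) atTop (𝓝 0) := by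
  have hinv : ∀ᶠ R : ℝ in atTop, R⁻¹ / (R⁻¹ + b) ^ 2 = R / (1 + R * b) ^ 2 := by
    filter_upwards [eventually_ne_atTop 0] with R hR
    rw [← mul_div_mul_left _ _ (pow_ne_zero 2 hR)]
    field_simp
  refine Tendsto.congr' hinv ?_
  have h := tendsto_inv_atTop_zero.div ((tendsto_inv_atTop_zero.add_const b).pow 2)
    (by rw [zero_add]; exact pow_ne_zero 2 hb)
  rwa [zero_div] at h

lemma rowObjective_eq {a b R : ℝ} (hR : 1 + R * (a + b) ≠ 0) :
    rowObjective a b ((1 + R * b) / (1 + R * (a + b))) ((1 + R * a) / (1 + R * (a + b))) R =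
      -(R / (1 + R * (a + b)) ^ 2) / 2
        + (1 + R * b) / (1 + R * (a + b)) / a + (1 + R * a) / (1 + R * (a + b)) / b
        - ((1 + R * b) / (1 + R * (a + b))) ^ 2 / (2 * a)
        - ((1 + R * a) / (1 + R * (a + b))) ^ 2 / (2 * b) := by
  have hsum : (1 + R * b) / (1 + R * (a + b)) + (1 + R * a) / (1 + R * (a + b)) - 1 =
      1 / (1 + R * (a + b)) := by
    field_simp
    ring
  rw [rowObjective, hsum]
  -- `ring` expands a sum under `⁻¹`, so it cannot match `(d ^ 2)⁻¹` with `(1 / d) ^ 2`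
  generalize 1 + R * (a + b) = d
  ring

lemma tendsto_rowObjective_atTop {a b : ℝ} (hs : a + b ≠ 0) :
    Tendsto (fun R => rowObjective a b ((1 + R * b) / (1 + R * (a + b)))
        ((1 + R * a) / (1 + R * (a + b))) R) atTop
      (𝓝 (b / (a + b) / a * (1 - b / (2 * (a + b)))
        + a / (a + b) / b * (1 - a / (2 * (a + b))))) := by
  have hx := tendsto_one_add_mul_div_one_add_mul_atTop b hs
  have hy := tendsto_one_add_mul_div_one_add_mul_atTop a hs
  have hlim := (((((tendsto_div_one_add_mul_sq_atTop hs).neg.div_const 2).add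
    (hx.div_const a)).add (hy.div_const b)).sub ((hx.pow 2).div_const (2 * a))).sub
    ((hy.pow 2).div_const (2 * b))
  refine Tendsto.congr' ?_ (hlim.trans_eq (congrArg 𝓝 ?_))
  · filter_upwards [eventually_one_add_mul_ne_zero hs] with R hR
    exact (rowObjective_eq hR).symm
  · generalize a + b = s
    ring

/-- as `R → +∞`, `g_NA(z_NA(R), R)` converges to the stated limit `E`. -/
theorem gNA_zNA_limit_at_top (k11 k12 k21 k22 : ℝ)
    (hk11 : 0 < k11) (hk12 : 0 < k12) (hk21 : 0 < k21) (hk22 : 0 < k22) :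
    Filter.Tendsto (fun R => gNA k11 k12 k21 k22 (zNA k11 k12 k21 k22 R) R) Filter.atTop
      (nhds ((k12 / (k11 + k12)) / k11 * (1 - k12 / (2 * (k11 + k12)))
        + (k11 / (k11 + k12)) / k12 * (1 - k11 / (2 * (k11 + k12)))
        + (k22 / (k22 + k21)) / k21 * (1 - k22 / (2 * (k22 + k21)))
        + (k21 / (k22 + k21)) / k22 * (1 - k21 / (2 * (k22 + k21))))) := by
  have hrow₁ := tendsto_rowObjective_atTop (a := k11) (b := k12) (by positivity)
  have hrow₂ := tendsto_rowObjective_atTop (a := k21) (b := k22) (by positivity)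
  rw [add_comm k22 k21]
  convert hrow₁.add hrow₂ using 2 with R
  · simp [gNA_eq_rowObjective_add, zNA]
  · exact add_assoc _ _ _
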